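/- Fix N ≥ 1, complex numbers p₁, …, p_N, pairwise distinct complex numbers τ₁, …, τ_N, and η ∈ ℂ with η ≠ 0. Let M(u) be the N×N matrix with (a,c) entry τ_a^{c−1}·(η^{N+1−2c}u − p_a) and M⁰ the N×N matrix with (a,c) entry τ_a^{c−1}. Let L be the trigonometric Ruijsenaars–Schneider Lax matrix, i.e. the N×N complex matrix with entries L_{ij} = (∏_{k≠j} (ητ_i − η⁻¹τ_k) / ∏_{k≠i} (τ_i − τ_k))·p_j. Then for all u ∈ ℂ: det M(u)/det M⁰ = det(u·1_N − L). -/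

import Mathlib

/-!
Let `V` be the Vandermonde matrix of the `τ`, `D = diag(η^(N-1-2c))` and
`C_ij = ∏_{k≠j} (ητ_i - η⁻¹τ_k) / (τ_j - τ_k)`. Lagrange interpolation of `x ↦ x^c` at
the nodes `τ`, evaluated at `η²τ_i`, gives `C V D = V`, so `det C = 1`. Since
`M(u) = u V D - diag(p) V`, this turns into `C M(u) = (u - C diag(p)) V`, and the Lax
matrix is `C diag(p)` conjugated by the diagonal matrix of nodal weights
`∏_{k≠i} (τ_i - τ_k)⁻¹`.
-/

/-- The N×N matrix `M(u)` with (a,c) entry `τ_a^{c-1} (η^{N+1-2c} u − p_a)`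
(here `c` is 0-indexed). -/
noncomputable def rsM (N : ℕ) (p τ : Fin N → ℂ) (η u : ℂ) :
    Matrix (Fin N) (Fin N) ℂ :=
  Matrix.of fun a c => τ a ^ (c : ℕ) * (η ^ ((N : ℤ) - 1 - 2 * (c : ℕ)) * u - p a)

/-- The Vandermonde matrix `M⁰` with (a,c) entry `τ_a^{c-1}`. -/
noncomputable def rsM0 (N : ℕ) (τ : Fin N → ℂ) : Matrix (Fin N) (Fin N) ℂ :=
  Matrix.of fun a c => τ a ^ (c : ℕ)

/-- The trigonometric Ruijsenaars–Schneider Lax matrix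
`L_{ij} = (∏_{k≠j} (ητ_i − η⁻¹τ_k) / ∏_{k≠i} (τ_i − τ_k)) p_j`. -/
noncomputable def trsLax (N : ℕ) (p τ : Fin N → ℂ) (η : ℂ) :
    Matrix (Fin N) (Fin N) ℂ :=
  Matrix.of fun i j =>
    (∏ k ∈ Finset.univ.erase j, (η * τ i - η⁻¹ * τ k)) /
        (∏ k ∈ Finset.univ.erase i, (τ i - τ k)) * p j

open Finset Matrix Polynomial Function

theorem Lagrange.eval_eq_sum_mul_prod_div {F ι : Type*} [Field F] [DecidableEq ι]
    {s : Finset ι} {v : ι → F} (hvs : Set.InjOn v s) {f : F[X]} (hf : f.degree < #s) (x : F) :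
    f.eval x = ∑ i ∈ s, f.eval (v i) * ∏ j ∈ s.erase i, (x - v j) / (v i - v j) := by
  conv_lhs => rw [Lagrange.eq_interpolate hvs hf]
  simp only [Lagrange.interpolate_apply, eval_finsetSum, eval_mul, eval_C, Lagrange.basis,
    eval_prod, Lagrange.basisDivisor, eval_sub, eval_X, div_eq_inv_mul]

theorem Finset.prod_zpow_eq_zpow_sum₀ {ι G₀ : Type*} [CommGroupWithZero G₀] (s : Finset ι)
    (f : ι → ℤ) {a : G₀} (ha : a ≠ 0) : ∏ i ∈ s, a ^ f i = a ^ ∑ i ∈ s, f i := by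
  induction s using Finset.cons_induction with
  | empty => simp
  | cons i s hi ih => rw [prod_cons, sum_cons, ih, zpow_add₀ ha]

theorem Fin.sum_sub_one_sub_two_mul_eq_zero (n : ℕ) :
    ∑ c : Fin n, ((n : ℤ) - 1 - 2 * (c : ℕ)) = 0 := by
  have hrev (c : Fin n) :
      (n : ℤ) - 1 - 2 * (c.rev : ℕ) = -((n : ℤ) - 1 - 2 * (c : ℕ)) := by
    have hc : (c : ℕ) + 1 ≤ n := c.2
    rw [Fin.val_rev]
    push_cast [Nat.cast_sub hc]
    ring
  have h := Equiv.sum_comp Fin.revPerm fun c : Fin n => ((n : ℤ) - 1 - 2 * (c : ℕ))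
  simp only [Fin.revPerm_apply, hrev, sum_neg_distrib] at h
  linarith

theorem Matrix.det_smul_one_sub_eq_of_mul_eq_mul {n R : Type*} [Fintype n] [DecidableEq n]
    [CommRing R] {A X Y : Matrix n n R} (hA : IsUnit A.det) (h : A * X = Y * A) (u : R) :
    (u • (1 : Matrix n n R) - X).det = (u • 1 - Y).det := by
  have hconj : A * (u • 1 - X) = (u • 1 - Y) * A := by
    rw [mul_sub, sub_mul, h, Matrix.mul_smul, Matrix.smul_mul, mul_one, one_mul]
  have hdet := congrArg det hconj
  rw [det_mul, det_mul] at hdet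
  exact hA.mul_left_cancel (hdet.trans (mul_comm _ _))

section
variable {K : Type*} [Field K] {n : ℕ}

def trsKernel (τ : Fin n → K) (η : K) : Matrix (Fin n) (Fin n) K :=
  of fun i j => ∏ k ∈ univ.erase j, (η * τ i - η⁻¹ * τ k) / (τ j - τ k)

def rsTwist (n : ℕ) (η : K) : Matrix (Fin n) (Fin n) K :=
  diagonal fun c => η ^ ((n : ℤ) - 1 - 2 * (c : ℕ))

theorem det_rsTwist {η : K} (hη : η ≠ 0) : (rsTwist n η).det = 1 := by
  rw [rsTwist, det_diagonal, prod_zpow_eq_zpow_sum₀ _ _ hη, Fin.sum_sub_one_sub_two_mul_eq_zero,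
    zpow_zero]

theorem trsKernel_mul_vandermonde_mul_rsTwist {τ : Fin n → K} (hτ : Injective τ) {η : K}
    (hη : η ≠ 0) : trsKernel τ η * vandermonde τ * rsTwist n η = vandermonde τ := by
  ext i c
  have hfactor : ∀ j, trsKernel τ η i j * vandermonde τ j c =
      η⁻¹ ^ (n - 1) *
        (τ j ^ (c : ℕ) * ∏ k ∈ univ.erase j, (η ^ 2 * τ i - τ k) / (τ j - τ k)) := by
    intro j
    have hterm : ∀ k, (η * τ i - η⁻¹ * τ k) / (τ j - τ k) =
        η⁻¹ * ((η ^ 2 * τ i - τ k) / (τ j - τ k)) := fun k => by field_simp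
    simp only [trsKernel, of_apply, vandermonde_apply, hterm, prod_mul_distrib, prod_const,
      card_erase_of_mem (mem_univ j), card_univ, Fintype.card_fin]
    ring
  have hdeg : (X ^ (c : ℕ) : K[X]).degree < #(univ : Finset (Fin n)) := by
    rw [degree_X_pow, card_univ, Fintype.card_fin]
    exact_mod_cast c.2
  have hlag := Lagrange.eval_eq_sum_mul_prod_div hτ.injOn hdeg (η ^ 2 * τ i)
  simp only [eval_pow, eval_X] at hlag
  rw [rsTwist, mul_diagonal, mul_apply, vandermonde_apply]
  simp only [hfactor, ← mul_sum, ← hlag]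
  have hn : ((n : ℤ) - 1 - 2 * (c : ℕ)) = ((n - 1 : ℕ) : ℤ) - ((2 * c : ℕ) : ℤ) := by
    have := c.2; omega
  rw [hn, zpow_sub₀ hη, zpow_natCast, zpow_natCast, inv_pow, mul_pow, pow_mul]
  field_simp

theorem det_trsKernel {τ : Fin n → K} (hτ : Injective τ) {η : K} (hη : η ≠ 0) :
    (trsKernel τ η).det = 1 := by
  have hdet := congrArg det (trsKernel_mul_vandermonde_mul_rsTwist hτ hη)
  rw [det_mul, det_mul, det_rsTwist hη, mul_one] at hdet
  exact mul_eq_right₀ (det_vandermonde_ne_zero_iff.mpr hτ) |>.mp hdet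

end

theorem rsM_eq_vandermonde (N : ℕ) (p τ : Fin N → ℂ) (η u : ℂ) :
    rsM N p τ η u = u • (vandermonde τ * rsTwist N η) - diagonal p * vandermonde τ := by
  ext a c
  simp only [rsM, rsTwist, of_apply, Matrix.sub_apply, Matrix.smul_apply, mul_diagonal,
    diagonal_mul, vandermonde_apply, smul_eq_mul]
  ring

theorem trsKernel_mul_rsM {N : ℕ} (p : Fin N → ℂ) {τ : Fin N → ℂ} (hτ : Injective τ)
    {η : ℂ} (hη : η ≠ 0) (u : ℂ) :
    trsKernel τ η * rsM N p τ η u = (u • 1 - trsKernel τ η * diagonal p) * rsM0 N τ := by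
  rw [rsM_eq_vandermonde, mul_sub, Matrix.mul_smul, ← mul_assoc,
    trsKernel_mul_vandermonde_mul_rsTwist hτ hη, sub_mul, Matrix.smul_mul, one_mul, mul_assoc]
  rfl

theorem trsLax_mul_diagonal_nodalWeight (N : ℕ) (p τ : Fin N → ℂ) (η : ℂ) :
    trsLax N p τ η * diagonal (Lagrange.nodalWeight univ τ) =
      diagonal (Lagrange.nodalWeight univ τ) * (trsKernel τ η * diagonal p) := by
  ext i j
  simp only [trsLax, trsKernel, Lagrange.nodalWeight, of_apply, mul_diagonal, diagonal_mul,
    prod_div_distrib, prod_inv_distrib]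
  ring

theorem detratio_eq_tRS_spectral_det_general (N : ℕ) (p τ : Fin N → ℂ)
    (hτ : Function.Injective τ) (η : ℂ) (hη : η ≠ 0) (u : ℂ) :
    (rsM N p τ η u).det / (rsM0 N τ).det =
      (u • (1 : Matrix (Fin N) (Fin N) ℂ) - trsLax N p τ η).det := by
  have hM := congrArg det (trsKernel_mul_rsM p hτ hη u)
  rw [det_mul, det_mul, det_trsKernel hτ hη, one_mul] at hM
  have hW : IsUnit (diagonal (Lagrange.nodalWeight univ τ)).det := by
    rw [det_diagonal, isUnit_iff_ne_zero, prod_ne_zero_iff]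
    exact fun i hi => Lagrange.nodalWeight_ne_zero hτ.injOn hi
  have hV : (rsM0 N τ).det ≠ 0 := det_vandermonde_ne_zero_iff.mpr hτ
  rw [hM, mul_div_cancel_right₀ _ hV,
    det_smul_one_sub_eq_of_mul_eq_mul hW (trsLax_mul_diagonal_nodalWeight N p τ η).symm]

/-- The Vandermonde-like determinant ratio solving the `T[U(N)]` QQ̃ system equals
the spectral determinant of the trigonometric Ruijsenaars–Schneider Lax matrix. -/
theorem detratio_eq_tRS_spectral_det (N : ℕ) (hN : 1 ≤ N) (p τ : Fin N → ℂ)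
    (hτ : Function.Injective τ) (η : ℂ) (hη : η ≠ 0) (u : ℂ) :
    (rsM N p τ η u).det / (rsM0 N τ).det =
      (u • (1 : Matrix (Fin N) (Fin N) ℂ) - trsLax N p τ η).det :=
  detratio_eq_tRS_spectral_det_general N p τ hτ η hη u
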